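/- Under event 𝒜, for every sampled vertex v' ∈ V' and every u' ∈ S'^{(√n·k)}_G[k](v'), the k-hop-limited distance in the skeleton graph equals the (√n·k)-hop-limited distance in G: d_{G'}^{(k)}(v',u') = d_G^{(√n k)}(v',u'). -/

import Mathlib

/-!
A skeleton edge expands to a path of at most `√n` hops in `G`, so `k` skeleton hops give at
most `√n·k` hops in `G`. Conversely, let `p` be the canonical `(√n·k)`-limited shortest path
from `v'` to `u'`. A sampled vertex strictly inside `p` is reached by a strictly shorter prefix
of `p` that is no heavier, so it precedes `u'` in the tie-breaking order and lies in `S \ {u'}`;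
hence `p` has fewer than `k` internal sampled vertices. Cutting `p` at them yields at most `k`
canonical subpaths without internal sampled vertices; by event 𝒜 each has fewer than `√n` hops
and is bounded by a single skeleton edge.
-/

open scoped ENNReal

namespace Stmt7

variable {V : Type*}

/-- Endpoint of a walk starting at `u` with subsequent vertices given by the list. -/
def last : V → List V → V
  | u, [] => u
  | _, x :: xs => last x xs

/-- Weight of a walk starting at `u` with subsequent vertices given by the list. -/
noncomputable def cost (w : V → V → ℝ≥0∞) : V → List V → ℝ≥0∞
  | _, [] => 0
  | u, x :: xs => w u x + cost w x xs

/-- `h`-hop-limited distance from `u` to `v` (non-edges have weight `⊤`). -/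
noncomputable def hdist (w : V → V → ℝ≥0∞) (h : ℕ) (u v : V) : ℝ≥0∞ :=
  ⨅ p ∈ {p : List V | p.length ≤ h ∧ last u p = v}, cost w u p

/-- Shortest-path distance from `u` to `v`. -/
noncomputable def dist (w : V → V → ℝ≥0∞) (u v : V) : ℝ≥0∞ :=
  ⨅ h : ℕ, hdist w h u v

/-- `S` is a set of (at most) `k` closest reachable vertices to `v` (excluding `v`),
with ties broken arbitrarily: members of `S` are reachable and distinct from `v`,
`|S| ≤ k`, every member is at least as close as every reachable non-member, and `S`
has exactly `k` elements unless it already contains all reachable vertices. -/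
def IsKClosest [Fintype V] (w : V → V → ℝ≥0∞) (k : ℕ) (v : V) (S : Finset V) : Prop :=
  (∀ u ∈ S, u ≠ v ∧ dist w v u < ⊤) ∧ S.card ≤ k ∧
  (∀ y ∈ S, ∀ z, z ∉ S → z ≠ v → dist w v z < ⊤ → dist w v y ≤ dist w v z) ∧
  (∀ z, z ∉ S → z ≠ v → dist w v z < ⊤ → S.card = k)

/-- Weight function of the union `G ∪ G^(k)` of the graph with the `k`-shortcut hopset:
hopset edges `(u,v)` (present when `u ∈ S v` or `v ∈ S u`) get weight `d_G(u,v)`. -/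
noncomputable def unionW [Fintype V] [DecidableEq V] (w : V → V → ℝ≥0∞) (S : V → Finset V)
    (u v : V) : ℝ≥0∞ :=
  if u ∈ S v ∨ v ∈ S u then min (w u v) (dist w u v) else w u v


/-- `p` is the canonical `i`-hop-limited shortest `u`–`v` path: it has at most `i`
edges, ends at `v`, has minimum weight (equal to the `i`-limited distance), and among
such paths it has the fewest edges and is lexicographically smallest with respect to
the vertex identifiers `ids` (comparing vertex sequences from the tail `u`). -/
def CanonicalPath (w : V → V → ℝ≥0∞) (ids : V → ℕ) (i : ℕ) (u v : V) (p : List V) : Prop :=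
  p.length ≤ i ∧ last u p = v ∧ cost w u p = hdist w i u v ∧
  ∀ q : List V, q.length ≤ i → last u q = v → cost w u q = hdist w i u v →
    p.length ≤ q.length ∧
    (p.length = q.length → ¬ List.Lex (· < ·) ((u :: q).map ids) ((u :: p).map ids))

/-- Weight function of the skeleton graph `G'` on the sampled set `V'`: an edge
between two sampled vertices has weight equal to the `s`-hop-limited distance in `G`
(`⊤`, i.e. no edge, if they are not connected by an `s`-hop-limited path). -/
noncomputable def skelW [DecidableEq V] (w : V → V → ℝ≥0∞) (V' : Finset V) (s : ℕ)
    (u v : V) : ℝ≥0∞ :=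
  if u ∈ V' ∧ v ∈ V' then hdist w s u v else ⊤

/-- Minimum number of hops of an `i`-hop-limited minimum-weight `u`–`v` path. -/
noncomputable def minHops (w : V → V → ℝ≥0∞) (i : ℕ) (u v : V) : ℕ :=
  sInf {ℓ : ℕ | ∃ p : List V, p.length = ℓ ∧ ℓ ≤ i ∧ last u p = v ∧ cost w u p = hdist w i u v}

/-- Strict comparison of vertices by distance, with ties broken by the tie-breaking
key `tie` (lexicographically). -/
def keyLt (d : V → ℝ≥0∞) (tie : V → ℕ × ℕ) (y z : V) : Prop :=
  Prod.Lex (· < ·) (Prod.Lex (· < ·) (· < ·)) (d y, tie y) (d z, tie z)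

/-- `S` is the set of the `k` closest vertices of `dom` to `v` (excluding `v`) with
respect to the distance function `d`, with ties broken by the key `tie`: members are
reachable, `|S| ≤ k`, every member strictly precedes every reachable non-member, and
`S` has exactly `k` elements unless it contains all reachable vertices of `dom`. -/
def IsKNear (d : V → ℝ≥0∞) (tie : V → ℕ × ℕ) (dom : Finset V) (k : ℕ) (v : V)
    (S : Finset V) : Prop :=
  S ⊆ dom ∧ v ∉ S ∧ S.card ≤ k ∧ (∀ y ∈ S, d y < ⊤) ∧
  (∀ y ∈ S, ∀ z ∈ dom, z ∉ S → z ≠ v → d z < ⊤ → keyLt d tie y z) ∧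
  (∀ z ∈ dom, z ≠ v → d z < ⊤ → z ∉ S → S.card = k)

section Walks

variable {w : V → V → ℝ≥0∞} {u v x : V} {p : List V} {h h' : ℕ}

@[simp] lemma last_nil (u : V) : last u ([] : List V) = u := rfl

@[simp] lemma last_cons (u x : V) (xs : List V) : last u (x :: xs) = last x xs := rfl

@[simp] lemma cost_nil (w : V → V → ℝ≥0∞) (u : V) : cost w u [] = 0 := rfl

@[simp] lemma cost_cons (w : V → V → ℝ≥0∞) (u x : V) (xs : List V) :
    cost w u (x :: xs) = w u x + cost w x xs := rfl

lemma last_append (u : V) (p q : List V) : last u (p ++ q) = last (last u p) q := by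
  induction p generalizing u with
  | nil => rfl
  | cons x xs ih => exact ih x

@[simp] lemma last_concat (u x : V) (p : List V) : last u (p ++ [x]) = x := by
  simp [last_append]

lemma cost_append (w : V → V → ℝ≥0∞) (u : V) (p q : List V) :
    cost w u (p ++ q) = cost w u p + cost w (last u p) q := by
  induction p generalizing u with
  | nil => simp
  | cons x xs ih => simp [ih, add_assoc]

lemma last_eq_getLast (u : V) : ∀ {p : List V} (hp : p ≠ []), last u p = p.getLast hp
  | [_], _ => rfl
  | x :: y :: ys, _ => last_eq_getLast x (List.cons_ne_nil y ys)

lemma exists_eq_append_of_mem_dropLast (u : V) (hx : x ∈ p.dropLast) :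
    ∃ A B : List V, p = (A ++ [x]) ++ (B ++ [last u p]) := by
  have hp : p ≠ [] := by rintro rfl; simp at hx
  obtain ⟨A, B, hAB⟩ := List.append_of_mem hx
  refine ⟨A, B, ?_⟩
  conv_lhs => rw [← List.dropLast_append_getLast hp, ← last_eq_getLast u hp, hAB]
  simp

lemma exists_shorter_of_not_nodup (h : ¬ (u :: p).Nodup) :
    ∃ q : List V, q.length < p.length ∧ last u q = last u p ∧ cost w u q ≤ cost w u p := by
  induction p generalizing u with
  | nil => simp at h
  | cons x xs ih =>
    rw [List.nodup_cons, not_and_or, not_not] at h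
    rcases h with hu | hdup
    · obtain ⟨A, B, hAB⟩ := List.append_of_mem hu
      have hsplit : x :: xs = (A ++ [u]) ++ B := by simp [hAB]
      refine ⟨B, by simp [hsplit]; omega, by rw [hsplit, last_append, last_concat], ?_⟩
      rw [hsplit, cost_append, last_concat]
      exact le_add_self
    · obtain ⟨q, hlen, hlast, hcost⟩ := ih hdup
      exact ⟨x :: q, by simpa using hlen, by simpa using hlast,
        by simpa using add_le_add_right hcost (w u x)⟩

lemma hdist_le_cost (hl : p.length ≤ h) (he : last u p = v) : hdist w h u v ≤ cost w u p :=
  iInf₂_le p ⟨hl, he⟩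

lemma hdist_anti (hh : h ≤ h') : hdist w h' u v ≤ hdist w h u v :=
  le_iInf₂ fun _ hp => hdist_le_cost (hp.1.trans hh) hp.2

@[simp] lemma hdist_self : hdist w h u u = 0 :=
  nonpos_iff_eq_zero.mp (hdist_le_cost (p := []) h.zero_le rfl)

lemma hdist_add_le (u x v : V) : hdist w (h + h') u v ≤ hdist w h u x + hdist w h' x v := by
  conv_rhs => simp only [hdist, Set.mem_ofPred_eq, iInf_and, ENNReal.iInf_add, ENNReal.add_iInf]
  refine le_iInf₂ fun q hq => le_iInf₂ fun hqv p => le_iInf₂ fun hp hpx => ?_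
  subst hpx hqv
  have := hdist_le_cost (w := w) (h := h + h') (p := p ++ q)
    (by simpa using add_le_add hp hq) (last_append u p q)
  rwa [cost_append] at this

end Walks

lemma _root_.ENNReal.eq_and_eq_of_add_le_add {a b c d : ℝ≥0∞} (hca : c ≤ a) (hdb : d ≤ b)
    (h : a + b ≤ c + d) (hab : a + b < ⊤) : a = c ∧ b = d := by
  have ha : a ≠ ⊤ := (le_self_add.trans_lt hab).ne
  have hb : b ≠ ⊤ := (le_add_self.trans_lt hab).ne
  exact ⟨le_antisymm ((ENNReal.add_le_add_iff_right hb).mp (h.trans (add_le_add le_rfl hdb)))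
      hca, le_antisymm ((ENNReal.add_le_add_iff_left ha).mp (h.trans (add_le_add hca le_rfl)))
      hdb⟩

lemma _root_.List.Lex.append_of_length_eq {α : Type*} {r : α → α → Prop} {s₁ s₂ t₁ t₂ : List α}
    (h : List.Lex r s₁ s₂) (hlen : s₁.length = s₂.length) :
    List.Lex r (s₁ ++ t₁) (s₂ ++ t₂) := by
  induction h with
  | nil => simp at hlen
  | cons _ ih => exact List.Lex.cons (ih (by simpa using hlen))
  | rel hab => exact List.Lex.rel hab

namespace CanonicalPath

variable {w : V → V → ℝ≥0∞} {ids : V → ℕ} {i : ℕ} {u v : V} {p q q₁ q₂ : List V}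

lemma unique (hids : Function.Injective ids)
    (hp : CanonicalPath w ids i u v p) (hq : CanonicalPath w ids i u v q) : p = q := by
  have hpq := hp.2.2.2 q hq.1 hq.2.1 hq.2.2.1
  have hqp := hq.2.2.2 p hp.1 hp.2.1 hp.2.2.1
  have hlen : p.length = q.length := le_antisymm hpq.1 hqp.1
  have hmap : (u :: p).map ids = (u :: q).map ids :=
    Std.Trichotomous.trichotomous (r := List.Lex (· < ·)) _ _ (hqp.2 hlen.symm) (hpq.2 hlen)
  simpa using (List.map_injective_iff.mpr hids) hmap

lemma restrict (hp : CanonicalPath w ids i u v p) : CanonicalPath w ids p.length u v p := by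
  have heq : hdist w p.length u v = hdist w i u v :=
    le_antisymm (hp.2.2.1 ▸ hdist_le_cost le_rfl hp.2.1) (hdist_anti hp.1)
  exact ⟨le_rfl, hp.2.1, hp.2.2.1.trans heq.symm,
    fun q hq₁ hq₂ hq₃ => hp.2.2.2 q (hq₁.trans hp.1) hq₂ (hq₃.trans heq)⟩

lemma nodup (hp : CanonicalPath w ids i u v p) : (u :: p).Nodup := by
  by_contra hdup
  obtain ⟨q, hlen, hlast, hcost⟩ := exists_shorter_of_not_nodup (w := w) hdup
  rw [hp.2.1] at hlast
  have hq : cost w u q = hdist w i u v :=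
    le_antisymm (hp.2.2.1 ▸ hcost) (hdist_le_cost (hlen.le.trans hp.1) hlast)
  exact hlen.not_ge (hp.2.2.2 q (hlen.le.trans hp.1) hlast hq).1

lemma minHops_eq (hp : CanonicalPath w ids i u v p) : minHops w i u v = p.length :=
  le_antisymm (Nat.sInf_le ⟨p, rfl, hp.1, hp.2.1, hp.2.2.1⟩) <|
    le_csInf ⟨p.length, p, rfl, hp.1, hp.2.1, hp.2.2.1⟩ fun _ ⟨q, hq, hqi, hqv, hqc⟩ =>
      hq ▸ (hp.2.2.2 q (hq ▸ hqi) hqv hqc).1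

lemma cost_eq_hdist_of_append (hp : CanonicalPath w ids (q₁.length + q₂.length) u v (q₁ ++ q₂))
    (hfin : cost w u (q₁ ++ q₂) < ⊤) :
    cost w u q₁ = hdist w q₁.length u (last u q₁) ∧
      cost w (last u q₁) q₂ = hdist w q₂.length (last u q₁) v := by
  have hv : last (last u q₁) q₂ = v := by rw [← last_append, hp.2.1]
  rw [cost_append] at hfin
  refine ENNReal.eq_and_eq_of_add_le_add (hdist_le_cost le_rfl rfl) (hdist_le_cost le_rfl hv)
    ?_ hfin
  rw [← cost_append, hp.2.2.1]
  exact hdist_add_le u (last u q₁) v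

lemma append_left (hp : CanonicalPath w ids (q₁.length + q₂.length) u v (q₁ ++ q₂))
    (hfin : cost w u (q₁ ++ q₂) < ⊤) : CanonicalPath w ids q₁.length u (last u q₁) q₁ := by
  have hc := cost_eq_hdist_of_append hp hfin
  refine ⟨le_rfl, rfl, hc.1, fun q hq₁ hq₂ hq₃ => ?_⟩
  have hmin := hp.2.2.2 (q ++ q₂) (by simpa using hq₁)
    (by rw [last_append, hq₂, ← last_append, hp.2.1])
    (by rw [cost_append, hq₂, hq₃, ← hc.1, ← cost_append, hp.2.2.1])
  simp only [List.length_append, add_le_add_iff_right, add_left_inj] at hmin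
  refine ⟨hmin.1, fun hlen hlex => hmin.2 hlen ?_⟩
  simpa using hlex.append_of_length_eq (t₁ := q₂.map ids) (t₂ := q₂.map ids) (by simp [hlen])

lemma append_right (hp : CanonicalPath w ids (q₁.length + q₂.length) u v (q₁ ++ q₂))
    (hfin : cost w u (q₁ ++ q₂) < ⊤) : CanonicalPath w ids q₂.length (last u q₁) v q₂ := by
  have hc := cost_eq_hdist_of_append hp hfin
  have hv : last (last u q₁) q₂ = v := by rw [← last_append, hp.2.1]
  refine ⟨le_rfl, hv, hc.2, fun q hq₁ hq₂ hq₃ => ?_⟩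
  have hmin := hp.2.2.2 (q₁ ++ q) (by simpa using hq₁) (by rw [last_append, hq₂])
    (by rw [cost_append, hq₃, ← hc.2, ← cost_append, hp.2.2.1])
  simp only [List.length_append, add_le_add_iff_left, add_right_inj] at hmin
  refine ⟨hmin.1, fun hlen hlex => hmin.2 hlen ?_⟩
  have hlex' := (List.lex_cons_iff.mp hlex).append_left _ ((u :: q₁).map ids)
  simpa using hlex'

end CanonicalPath

section Skeleton

variable [DecidableEq V] {w : V → V → ℝ≥0∞} {V' : Finset V} {s : ℕ}

lemma hdist_le_skelW (u v : V) : hdist w s u v ≤ skelW w V' s u v := by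
  unfold skelW
  split_ifs
  exacts [le_rfl, le_top]

lemma hdist_le_cost_skelW (V' : Finset V) (s : ℕ) :
    ∀ (p : List V) (u : V), hdist w (s * p.length) u (last u p) ≤ cost (skelW w V' s) u p
  | [], u => by simp
  | x :: xs, u => by
    rw [last_cons, cost_cons, List.length_cons, Nat.mul_succ, add_comm]
    exact (hdist_add_le u x _).trans
      (add_le_add (hdist_le_skelW u x) (hdist_le_cost_skelW V' s xs x))

lemma hdist_le_hdist_skelW (k : ℕ) (u v : V) :
    hdist w (s * k) u v ≤ hdist (skelW w V' s) k u v :=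
  le_iInf₂ fun p hp =>
    (hdist_anti (Nat.mul_le_mul_left s hp.1)).trans (hp.2 ▸ hdist_le_cost_skelW V' s p u)

variable {ids : V → ℕ} {P : ℕ → V → V → List V} {u v : V} {p : List V}

lemma skelW_le_cost_of_dropLast_disjoint (hids : Function.Injective ids)
    (hP : ∀ i u v, hdist w i u v < ⊤ → CanonicalPath w ids i u v (P i u v))
    (hA : ∀ i u v, hdist w i u v < ⊤ → s ≤ (P i u v).length → ∃ x ∈ (P i u v).dropLast, x ∈ V')
    (hu : u ∈ V') (hv : v ∈ V') (hp : CanonicalPath w ids p.length u v p)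
    (hfin : cost w u p < ⊤) (hdisj : ∀ x ∈ p.dropLast, x ∉ V') :
    skelW w V' s u v ≤ cost w u p := by
  have hfin' : hdist w p.length u v < ⊤ := hp.2.2.1 ▸ hfin
  have hPp : P p.length u v = p := (hP _ u v hfin').unique hids hp
  have hshort : p.length ≤ s := by
    by_contra hlong
    obtain ⟨x, hx, hxV⟩ := hA _ u v hfin' (by rw [hPp]; omega)
    exact hdisj x (hPp ▸ hx) hxV
  rw [skelW, if_pos ⟨hu, hv⟩]
  exact hdist_le_cost hshort hp.2.1

lemma hdist_skelW_le_cost (hids : Function.Injective ids)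
    (hP : ∀ i u v, hdist w i u v < ⊤ → CanonicalPath w ids i u v (P i u v))
    (hA : ∀ i u v, hdist w i u v < ⊤ → s ≤ (P i u v).length → ∃ x ∈ (P i u v).dropLast, x ∈ V')
    (hu : u ∈ V') (hv : v ∈ V') (hp : CanonicalPath w ids p.length u v p)
    (hfin : cost w u p < ⊤) :
    hdist (skelW w V' s) (p.dropLast.countP (· ∈ V') + 1) u v ≤ cost w u p := by
  induction hlen : p.length using Nat.strong_induction_on generalizing p u v with
  | _ L ih =>
    subst hlen
    by_cases hdisj : ∀ x ∈ p.dropLast, x ∉ V'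
    · calc hdist (skelW w V' s) (p.dropLast.countP (· ∈ V') + 1) u v
          ≤ cost (skelW w V' s) u [v] := hdist_le_cost (by simp) rfl
        _ ≤ cost w u p := by
          simpa using skelW_le_cost_of_dropLast_disjoint hids hP hA hu hv hp hfin hdisj
    push Not at hdisj
    obtain ⟨x, hx, hxV⟩ := hdisj
    obtain ⟨A, B, hAB⟩ := exists_eq_append_of_mem_dropLast u hx
    rw [hp.2.1] at hAB
    subst hAB
    rw [List.length_append] at hp
    have hcost : cost w u (A ++ [x] ++ (B ++ [v]))
        = cost w u (A ++ [x]) + cost w x (B ++ [v]) := by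
      rw [cost_append, last_concat]
    rw [hcost] at hfin
    have ih₁ := ih _ (by simp) hu hxV (by simpa using hp.append_left (hcost ▸ hfin))
      (le_self_add.trans_lt hfin) rfl
    have ih₂ := ih _ (by simp; omega) hxV hv (by simpa using hp.append_right (hcost ▸ hfin))
      (le_add_self.trans_lt hfin) rfl
    have hcount : (A ++ [x] ++ (B ++ [v])).dropLast.countP (· ∈ V') + 1
        = (A.countP (· ∈ V') + 1) + (B.countP (· ∈ V') + 1) := by
      simp [← List.append_assoc, hxV]; omega
    calc hdist (skelW w V' s) ((A ++ [x] ++ (B ++ [v])).dropLast.countP (· ∈ V') + 1) u v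
        ≤ hdist (skelW w V' s) (A.countP (· ∈ V') + 1) u x
          + hdist (skelW w V' s) (B.countP (· ∈ V') + 1) x v := hcount ▸ hdist_add_le u x v
      _ ≤ cost w u (A ++ [x]) + cost w x (B ++ [v]) := by simpa using add_le_add ih₁ ih₂
      _ = cost w u (A ++ [x] ++ (B ++ [v])) := hcost.symm

end Skeleton

section KNear

variable [DecidableEq V] {w : V → V → ℝ≥0∞} {ids : V → ℕ} {i k : ℕ} {V' S : Finset V}
  {u v x : V} {p : List V}

lemma IsKNear.mem_erase_of_mem_dropLast
    (hS : IsKNear (hdist w i v) (fun y => (minHops w i v y, ids y)) V' k v S) (hu : u ∈ S)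
    (hp : CanonicalPath w ids i v u p) (hx : x ∈ p.dropLast) (hxV : x ∈ V') : x ∈ S.erase u := by
  obtain ⟨-, -, -, hSfin, hSlt, -⟩ := hS
  obtain ⟨A, B, hAB⟩ := exists_eq_append_of_mem_dropLast v hx
  rw [hp.2.1] at hAB
  have hnd := hp.nodup
  rw [hAB] at hnd
  have hxv : x ≠ v := by rintro rfl; simp at hnd
  have hxu : x ≠ u := by rintro rfl; simp [List.nodup_append] at hnd
  have hqlen : (A ++ [x]).length < p.length := by rw [hAB]; simp
  have hqcost : cost w v (A ++ [x]) ≤ hdist w i v u := by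
    rw [← hp.2.2.1, hAB, cost_append w v (A ++ [x])]
    exact le_self_add
  have hdx : hdist w i v x ≤ cost w v (A ++ [x]) :=
    hdist_le_cost (hqlen.le.trans hp.1) (last_concat v x A)
  refine Finset.mem_erase.mpr ⟨hxu, ?_⟩
  by_contra hxS
  have hlt := hSlt u hu x hxV hxS hxv ((hdx.trans hqcost).trans_lt (hSfin u hu))
  simp only [keyLt, Prod.lex_def] at hlt
  rcases hlt with hlt | ⟨heq, hlt⟩
  · exact (hdx.trans hqcost).not_gt hlt
  · have hqx : cost w v (A ++ [x]) = hdist w i v x := le_antisymm (hqcost.trans heq.le) hdx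
    have hhops : minHops w i v x ≤ (A ++ [x]).length :=
      Nat.sInf_le ⟨_, rfl, hqlen.le.trans hp.1, last_concat v x A, hqx⟩
    rw [hp.minHops_eq] at hlt
    omega

lemma IsKNear.countP_dropLast_lt_card
    (hS : IsKNear (hdist w i v) (fun y => (minHops w i v y, ids y)) V' k v S) (hu : u ∈ S)
    (hp : CanonicalPath w ids i v u p) : p.dropLast.countP (· ∈ V') < S.card := by
  have hnd : (p.dropLast.filter (· ∈ V')).Nodup :=
    (List.filter_sublist.trans p.dropLast_sublist).nodup (List.nodup_cons.mp hp.nodup).2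
  have hsub : (p.dropLast.filter (· ∈ V')).toFinset ⊆ S.erase u := fun x hx => by
    simp only [List.mem_toFinset, List.mem_filter, decide_eq_true_eq] at hx
    exact hS.mem_erase_of_mem_dropLast hu hp hx.1 hx.2
  calc p.dropLast.countP (· ∈ V') = (p.dropLast.filter (· ∈ V')).toFinset.card := by
        rw [List.countP_eq_length_filter, List.toFinset_card_of_nodup hnd]
    _ ≤ (S.erase u).card := Finset.card_le_card hsub
    _ < S.card := Finset.card_erase_lt_of_mem hu

end KNear

theorem skeleton_hdist_eq_general [Fintype V] [DecidableEq V]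
    (w : V → V → ℝ≥0∞)
    (n : ℕ)
    (ids : V → ℕ) (hids : Function.Injective ids)
    (P : ℕ → V → V → List V)
    (hP : ∀ i u v, hdist w i u v < ⊤ → CanonicalPath w ids i u v (P i u v))
    (V' : Finset V)
    (hA : ∀ i u v, hdist w i u v < ⊤ → Nat.sqrt n ≤ (P i u v).length →
      ∃ x ∈ (P i u v).dropLast, x ∈ V')
    (k : ℕ)
    (v' : V) (hv' : v' ∈ V')
    (S : Finset V)
    (hS : IsKNear (hdist w (Nat.sqrt n * k) v')
      (fun x => (minHops w (Nat.sqrt n * k) v' x, ids x)) V' k v' S)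
    (u' : V) (hu' : u' ∈ S) :
    hdist (skelW w V' (Nat.sqrt n)) k v' u' = hdist w (Nat.sqrt n * k) v' u' := by
  refine le_antisymm ?_ (hdist_le_hdist_skelW k v' u')
  set p := P (Nat.sqrt n * k) v' u'
  have hfin : hdist w (Nat.sqrt n * k) v' u' < ⊤ := hS.2.2.2.1 u' hu'
  have hp : CanonicalPath w ids (Nat.sqrt n * k) v' u' p := hP _ v' u' hfin
  have hcount : p.dropLast.countP (· ∈ V') + 1 ≤ k :=
    (hS.countP_dropLast_lt_card hu' hp).trans_le hS.2.2.1
  calc hdist (skelW w V' (Nat.sqrt n)) k v' u'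
      ≤ hdist (skelW w V' (Nat.sqrt n)) (p.dropLast.countP (· ∈ V') + 1) v' u' :=
        hdist_anti hcount
    _ ≤ cost w v' p :=
        hdist_skelW_le_cost hids hP hA hv' (hS.1 hu') hp.restrict (hp.2.2.1 ▸ hfin)
    _ = hdist w (Nat.sqrt n * k) v' u' := hp.2.2.1

/-- Under event 𝒜, for every sampled `v'` and every `u'` among the `k` closest
sampled vertices to `v'` under `(√n·k)`-limited distance in `G`, the `k`-hop-limited
distance in the skeleton graph equals the `(√n·k)`-hop-limited distance in `G`. -/
theorem skeleton_hdist_eq [Fintype V] [DecidableEq V]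
    (w : V → V → ℝ≥0∞) (hsymm : ∀ u v, w u v = w v u)
    (n : ℕ) (hn : n = Fintype.card V)
    (ids : V → ℕ) (hids : Function.Injective ids)
    (P : ℕ → V → V → List V)
    (hP : ∀ i u v, hdist w i u v < ⊤ → CanonicalPath w ids i u v (P i u v))
    (V' : Finset V)
    (hA : ∀ i u v, hdist w i u v < ⊤ → Nat.sqrt n ≤ (P i u v).length →
      ∃ x ∈ (P i u v).dropLast, x ∈ V')
    (k : ℕ) (hk : 1 ≤ k)
    (v' : V) (hv' : v' ∈ V')
    (S : Finset V)
    (hS : IsKNear (hdist w (Nat.sqrt n * k) v')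
      (fun x => (minHops w (Nat.sqrt n * k) v' x, ids x)) V' k v' S)
    (u' : V) (hu' : u' ∈ S) :
    hdist (skelW w V' (Nat.sqrt n)) k v' u' = hdist w (Nat.sqrt n * k) v' u' :=
  skeleton_hdist_eq_general w n ids hids P hP V' hA k v' hv' S hS u' hu'

end Stmt7
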